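/- arXiv:2204.00887 — 4 statements merged into one kernel-verified Lean document; each statement's English description precedes it below -/
import Mathlib

section
/- A rational monomial feature φ(x) = ∏_{i=1}^d x_i^{α_i} on the units-typed space Z = ∏_{i=1}^d X_{u_i} (with all x_i > 0) is invariant under the rescaling group action of G = (ℝ_{>0})^k if and only if ∑_{i=1}^d α_i u_i = 0 in ℤ^k. -/
open Finset

lemma zpow_sum' {ι : Type*} (a : ℝ) (ha : a ≠ 0) (s : Finset ι) (f : ι → ℤ) :
    a ^ (∑ i ∈ s, f i) = ∏ i ∈ s, a ^ f i := by
  induction s using Finset.cons_induction with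
  | empty => simp
  | cons i s hi ih => rw [Finset.sum_cons, Finset.prod_cons, zpow_add₀ ha, ih]

lemma prod_zpow_swap {d k : ℕ} (g : Fin k → ℝ) (hg : ∀ j, 0 < g j)
    (e : Fin d → Fin k → ℤ) :
    (∏ i, ∏ j, g j ^ e i j) = ∏ j, g j ^ (∑ i, e i j) := by
  rw [Finset.prod_comm]
  exact Finset.prod_congr rfl fun j _ => (zpow_sum' _ (ne_of_gt (hg j)) _ _).symm

/-- A rational monomial `φ(x) = ∏ i, x i ^ α i` on the units-typed space
`∏ i, X_{u i}` (positive inputs) is invariant under the rescaling action of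
`G = (ℝ_{>0})^k` if and only if `∑ i, α i • u i = 0` in `ℤ^k`. -/
theorem dimensionless_monomial_iff (k d : ℕ) (u : Fin d → Fin k → ℤ)
    (α : Fin d → ℤ) :
    (∀ (x : Fin d → ℝ), (∀ i, 0 < x i) →
      ∀ (g : Fin k → ℝ), (∀ j, 0 < g j) →
        (∏ i, ((∏ j, g j ^ (-(u i j))) * x i) ^ α i) = ∏ i, x i ^ α i)
    ↔ (∀ j, (∑ i, α i * u i j) = 0) := by
  constructor
  · intro h j
    have h2 := h (fun _ => 1) (fun _ => one_pos)
      (fun j' => if j' = j then 2 else 1)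
      (fun j' => by by_cases hj : j' = j <;> simp [hj])
    simp only [mul_one, one_zpow, Finset.prod_ite_eq', Finset.mem_univ, if_true] at h2
    have h3 : (∏ i, ((2:ℝ) ^ (-(u i j))) ^ α i) = 1 := by
      simpa using h2
    have h4 : (2:ℝ) ^ (∑ i, (-(u i j)) * α i) = 1 := by
      rw [← h3, zpow_sum' _ (by norm_num : (2:ℝ) ≠ 0)]
      exact Finset.prod_congr rfl fun i _ => (zpow_mul 2 _ _)
    have h5 : (∑ i, (-(u i j)) * α i) = 0 :=
      zpow_right_injective₀ (by norm_num : (0:ℝ) < 2) (by norm_num)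
        (h4.trans (zpow_zero 2).symm)
    have : (∑ i, α i * u i j) = -∑ i, (-(u i j)) * α i := by
      rw [← Finset.sum_neg_distrib]
      exact Finset.sum_congr rfl fun i _ => by ring
    rw [this, h5, neg_zero]
  · intro h x hx g hg
    have key : (∏ i, (∏ j, g j ^ (-(u i j))) ^ α i) = 1 := by
      have h1 : (∏ i, (∏ j, g j ^ (-(u i j))) ^ α i)
          = ∏ i, ∏ j, g j ^ (-(u i j) * α i) := by
        refine Finset.prod_congr rfl fun i _ => ?_
        rw [← Finset.prod_zpow]
        exact Finset.prod_congr rfl fun j _ => (zpow_mul _ _ _).symm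
      rw [h1, prod_zpow_swap g hg]
      refine Finset.prod_eq_one fun j _ => ?_
      have hz : (∑ i, (-(u i j)) * α i) = 0 := by
        have hj := h j
        rw [← neg_eq_zero, ← Finset.sum_neg_distrib] at hj
        rw [← hj]
        exact Finset.sum_congr rfl fun i _ => by ring
      rw [hz, zpow_zero]
    calc (∏ i, ((∏ j, g j ^ (-(u i j))) * x i) ^ α i)
        = (∏ i, (∏ j, g j ^ (-(u i j))) ^ α i) * ∏ i, x i ^ α i := by
          rw [← Finset.prod_mul_distrib]
          exact Finset.prod_congr rfl fun i _ => mul_zpow _ _ _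
      _ = ∏ i, x i ^ α i := by rw [key, one_mul]
end

section
/- If f : Z_X → Z_Y is a non-constant units-equivariant function whose output has units vector v ∈ ℤ^k, and the domain contains all positive inputs, then v lies in the rational span of the input units vectors u_1, ..., u_d. -/
open Finset

/-- If `f` is a non-constant units-equivariant function on positive inputs
with output units vector `v`, then `v` lies in the rational span of the input
units vectors `u_1, …, u_d`. -/
theorem output_units_in_span (k d : ℕ) (u : Fin d → Fin k → ℤ) (v : Fin k → ℤ)
    (f : (Fin d → ℝ) → ℝ)
    (hequiv : ∀ (x : Fin d → ℝ), (∀ i, 0 < x i) →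
      ∀ (g : Fin k → ℝ), (∀ j, 0 < g j) →
        f (fun i => (∏ j, g j ^ (-(u i j))) * x i)
          = (∏ j, g j ^ (-(v j))) * f x)
    (hnonconst : ∃ (x x' : Fin d → ℝ), (∀ i, 0 < x i) ∧ (∀ i, 0 < x' i) ∧
      f x ≠ f x') :
    ∃ c : Fin d → ℚ, ∀ j, (v j : ℚ) = ∑ i, c i * (u i j : ℚ) := by
  by_contra hc
  push_neg at hc
  set uq : Fin d → Fin k → ℚ := fun i j => (u i j : ℚ) with huq
  set vq : Fin k → ℚ := fun j => (v j : ℚ) with hvq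
  -- `vq` is not in the span of the `uq i`.
  have hnmem : vq ∉ Submodule.span ℚ (Set.range uq) := by
    intro hmem
    rw [Submodule.mem_span_range_iff_exists_fun] at hmem
    obtain ⟨c, hcsum⟩ := hmem
    obtain ⟨j, hj⟩ := hc c
    apply hj
    have h := congrFun hcsum j
    simp only [Finset.sum_apply, Pi.smul_apply, smul_eq_mul] at h
    exact h.symm
  obtain ⟨φ, hφv, hφmap⟩ :=
    Submodule.exists_dual_map_eq_bot_of_notMem hnmem inferInstance
  have hφu : ∀ i, φ (uq i) = 0 := by
    intro i
    have : φ (uq i) ∈ Submodule.map φ (Submodule.span ℚ (Set.range uq)) :=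
      Submodule.mem_map_of_mem (Submodule.subset_span ⟨i, rfl⟩)
    rw [hφmap] at this
    simpa using this
  set w : Fin k → ℚ := fun j => φ (fun l => if j = l then 1 else 0) with hw
  have hφeq : ∀ x : Fin k → ℚ, φ x = ∑ j, x j * w j := by
    intro x
    rw [LinearMap.pi_apply_eq_sum_univ φ x]
    exact Finset.sum_congr rfl fun j _ => rfl
  -- define the group element g j = 2 ^ (w j)
  set g : Fin k → ℝ := fun j => (2 : ℝ) ^ ((w j : ℝ)) with hg
  have hgpos : ∀ j, 0 < g j := fun j => Real.rpow_pos_of_pos (by norm_num) _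
  -- the key product computation
  have hprod : ∀ a : Fin k → ℤ,
      (∏ j, g j ^ (-(a j))) = (2 : ℝ) ^ (-((∑ j, (a j : ℚ) * w j) : ℚ) : ℝ) := by
    intro a
    have : ∀ j, g j ^ (-(a j)) = (2 : ℝ) ^ (((w j : ℚ) : ℝ) * ((-(a j) : ℤ) : ℝ)) := by
      intro j
      rw [Real.rpow_mul (by norm_num), Real.rpow_intCast]
    rw [Finset.prod_congr rfl fun j _ => this j, ← Real.rpow_sum_of_pos (by norm_num)]
    congr 1
    push_cast
    rw [← Finset.sum_neg_distrib]
    exact Finset.sum_congr rfl fun j _ => by ring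
  have hprodu : ∀ i, (∏ j, g j ^ (-(u i j))) = 1 := by
    intro i
    rw [hprod (u i)]
    have : (∑ j, (u i j : ℚ) * w j) = 0 := by rw [← hφeq (uq i), hφu i]
    rw [this]
    norm_num
  set r : ℚ := ∑ j, (v j : ℚ) * w j with hr
  have hrne : r ≠ 0 := by
    rw [hr, ← hφeq vq]
    exact hφv
  have hprodv : (∏ j, g j ^ (-(v j))) = (2 : ℝ) ^ (-(r : ℝ)) := hprod v
  -- conclude f is zero on positive inputs
  have hzero : ∀ x : Fin d → ℝ, (∀ i, 0 < x i) → f x = 0 := by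
    intro x hx
    have h1 := hequiv x hx g hgpos
    rw [hprodv] at h1
    have h2 : (fun i => (∏ j, g j ^ (-(u i j))) * x i) = x := by
      funext i; rw [hprodu i, one_mul]
    rw [h2] at h1
    -- f x = 2^(-r) * f x, with 2^(-r) ≠ 1
    have hsm : StrictMono fun y : ℝ => (2 : ℝ) ^ y :=
      fun a b hab => (Real.rpow_lt_rpow_left_iff one_lt_two).mpr hab
    have hne1 : (2 : ℝ) ^ (-(r : ℝ)) ≠ 1 := by
      intro habs
      have h0 : -(r : ℝ) = 0 := hsm.injective (by rw [habs, Real.rpow_zero])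
      have h0' : (r : ℝ) = 0 := by linarith
      exact hrne (by exact_mod_cast h0')
    by_contra hfx
    exact hne1 (mul_right_cancel₀ hfx (by rw [one_mul]; exact h1.symm))
  obtain ⟨x, x', hx, hx', hne⟩ := hnonconst
  exact hne (by rw [hzero x hx, hzero x' hx'])
end

section
/- (Buckingham Pi, abstract version for positive inputs) Assume the units matrix U = [u_1 ... u_d] has rank k and the lattice {α ∈ ℤ^d : Uα = 0} has a ℤ-basis β_1,...,β_s with s = d − k, generating dimensionless monomials φ_l(x) = ∏_i x_i^{β_{li}}. Then a function f : (ℝ_{>0})^d → ℝ is invariant under the G = (ℝ_{>0})^k rescaling action if and only if there exists h : ℝ^s → ℝ with f(x) = h(φ_1(x),...,φ_s(x)) for all x ∈ (ℝ_{>0})^d. -/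
open scoped Matrix

/-!
In logarithmic coordinates `y = log x` the rescaling by `g = exp w` is the translation
`y ↦ y - Uᵀ w`, and the monomials are `y ↦ exp (B y)`, where `B` is the matrix with
rows `β l`. The rows of an integer matrix are linearly independent over `ℤ`, `ℚ` and `ℝ`
alike, so `rank U = k` and `rank B = s = d - k` hold over `ℝ`.
As `B Uᵀ = 0`, a dimension count gives `ker B = range Uᵀ`: invariance under the
translations means being constant on the fibres of `B`, which is factoring through `B`.
-/

namespace Matrix

variable {K : Type*} [Field K] {l m n : Type*} [Fintype m] [Fintype n]

theorem linearIndependent_row_of_rank_eq_card {A : Matrix m n K} (h : A.rank = Fintype.card m) :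
    LinearIndependent K A.row :=
  linearIndependent_iff_card_eq_finrank_span.mpr <| by
    rw [Set.finrank, ← rank_eq_finrank_span_row, h]

theorem rank_map_algebraMap_eq_card_iff {R : Type*} [CommRing R] [Algebra R K]
    [FaithfulSMul R K] {A : Matrix m n R} :
    (A.map (algebraMap R K)).rank = Fintype.card m ↔ LinearIndependent R A.row :=
  ⟨fun h => linearIndependent_algebraMap_comp_iff.mp (linearIndependent_row_of_rank_eq_card h),
    fun h => (linearIndependent_algebraMap_comp_iff.mpr h).rank_matrix⟩

theorem ker_mulVecLin_eq_range_of_mul_eq_zero {B : Matrix l n K} {A : Matrix n m K}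
    (hBA : B * A = 0) (hrank : B.rank + A.rank = Fintype.card n) :
    LinearMap.ker B.mulVecLin = LinearMap.range A.mulVecLin := by
  have hle : LinearMap.range A.mulVecLin ≤ LinearMap.ker B.mulVecLin := by
    rw [LinearMap.range_le_ker_iff, ← mulVecLin_mul, hBA, mulVecLin_zero]
  have hdim := LinearMap.finrank_range_add_finrank_ker B.mulVecLin
  rw [Module.finrank_fintype_fun_eq_card] at hdim
  refine (Submodule.eq_of_le_of_finrank_eq hle ?_).symm
  change A.rank = _
  change B.rank + _ = _ at hdim
  omega

end Matrix

theorem forall_sub_eq_iff_exists_factor_of_ker_eq_range {R V W Z Y α : Type*} [Ring R]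
    [AddCommGroup V] [AddCommGroup W] [AddCommGroup Z] [Module R V] [Module R W] [Module R Z]
    {P : W →ₗ[R] V} {Q : V →ₗ[R] Z} (hPQ : LinearMap.ker Q = LinearMap.range P)
    {e : Z → Y} (he : Function.Injective e) (F : V → α) :
    (∀ y w, F (y - P w) = F y) ↔ ∃ h : Y → α, ∀ y, F y = h (e (Q y)) := by
  constructor
  · intro hF
    refine ⟨Function.extend (e ∘ Q) F fun _ => F 0,
      fun y => (Function.FactorsThrough.extend_apply ?_ _ y).symm⟩
    intro y y' hyy'
    obtain ⟨w, hw⟩ : y - y' ∈ LinearMap.range P := by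
      rw [← hPQ, LinearMap.mem_ker, map_sub, he hyy', sub_self]
    rw [← hF y w, hw, sub_sub_cancel]
  · rintro ⟨h, hF⟩ y w
    have hQP : Q (P w) = 0 := by
      rw [← LinearMap.mem_ker, hPQ]
      exact LinearMap.mem_range_self P w
    rw [hF, hF, map_sub, hQP, sub_zero]

theorem forall_pos_iff_forall_exp {ι : Type*} {p : (ι → ℝ) → Prop} :
    (∀ x : ι → ℝ, (∀ i, 0 < x i) → p x) ↔
      ∀ y : ι → ℝ, p fun i => Real.exp (y i) := by
  refine ⟨fun h y => h _ fun i => Real.exp_pos (y i), fun h x hx => ?_⟩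
  simpa only [Real.exp_log (hx _)] using h fun i => Real.log (x i)

theorem prod_exp_zpow {ι : Type*} [Fintype ι] (y : ι → ℝ) (e : ι → ℤ) :
    ∏ i, Real.exp (y i) ^ e i = Real.exp (∑ i, e i * y i) := by
  simp only [Real.exp_sum, ← Real.rpow_intCast, ← Real.exp_mul, mul_comm]

theorem buckingham_pi_general (k d s : ℕ) (u : Fin d → Fin k → ℤ)
    (U : Matrix (Fin k) (Fin d) ℤ) (hU : U = Matrix.of fun j i => u i j)
    (hrank : (U.map (Int.cast : ℤ → ℚ)).rank = k)
    (hs : s = d - k)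
    (β : Fin s → Fin d → ℤ)
    (hker : ∀ l, U.mulVec (β l) = 0)
    (hindep : ∀ c : Fin s → ℤ, (∑ l, c l • β l) = 0 → c = 0)
    (f : (Fin d → ℝ) → ℝ) :
    (∀ (x : Fin d → ℝ), (∀ i, 0 < x i) →
        ∀ (g : Fin k → ℝ), (∀ j, 0 < g j) →
          f (fun i => (∏ j, g j ^ (-(u i j))) * x i) = f x)
    ↔ (∃ h : (Fin s → ℝ) → ℝ, ∀ (x : Fin d → ℝ), (∀ i, 0 < x i) →
        f x = h (fun l => ∏ i, x i ^ β l i)) := by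
  set A : Matrix (Fin d) (Fin k) ℝ := (U.map (algebraMap ℤ ℝ)).transpose
  set B : Matrix (Fin s) (Fin d) ℝ := (Matrix.of β).map (algebraMap ℤ ℝ)
  have hUrow : LinearIndependent ℤ U.row :=
    Matrix.rank_map_algebraMap_eq_card_iff (K := ℚ).mp (by rw [Fintype.card_fin]; exact hrank)
  have hβrow : LinearIndependent ℤ (Matrix.of β).row :=
    Fintype.linearIndependent_iff.mpr fun c hc => congrFun (hindep c hc)
  have hBA : B * A = 0 := by
    ext l j
    simpa [A, B, Matrix.mul_apply, Matrix.mulVec, dotProduct, mul_comm] using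
      congrArg (Int.cast : ℤ → ℝ) (congrFun (hker l) j)
  have hkd : k ≤ d := hrank ▸ Matrix.rank_le_width _
  have hker_eq : LinearMap.ker B.mulVecLin = LinearMap.range A.mulVecLin := by
    refine Matrix.ker_mulVecLin_eq_range_of_mul_eq_zero hBA ?_
    rw [Matrix.rank_transpose, Matrix.rank_map_algebraMap_eq_card_iff.mpr hUrow,
      Matrix.rank_map_algebraMap_eq_card_iff.mpr hβrow]
    simp only [Fintype.card_fin]
    omega
  have hact : ∀ y w, (fun i => (∏ j, Real.exp (w j) ^ (-(u i j))) * Real.exp (y i))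
      = fun i => Real.exp ((y - A *ᵥ w) i) := by
    intro y w
    ext i
    rw [prod_exp_zpow, ← Real.exp_add]
    simp [A, hU, Matrix.mulVec, dotProduct, sub_eq_neg_add]
  have hmono : ∀ y, (fun l => ∏ i, Real.exp (y i) ^ β l i)
      = fun l => Real.exp ((B *ᵥ y) l) := by
    intro y
    ext l
    simp [prod_exp_zpow, B, Matrix.mulVec, dotProduct]
  simp only [forall_pos_iff_forall_exp, hact, hmono]
  exact forall_sub_eq_iff_exists_factor_of_ker_eq_range hker_eq Real.exp_injective.comp_left
    fun y => f fun i => Real.exp (y i)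

/-- Buckingham Pi theorem (abstract version for positive inputs): if the units
matrix `U` has rank `k`, and `β_1,…,β_s` (with `s = d − k`) is a `ℤ`-basis of
the lattice `{α ∈ ℤ^d : U α = 0}`, generating the dimensionless monomials
`φ_l(x) = ∏ i, x i ^ β l i`, then `f : (ℝ_{>0})^d → ℝ` is invariant under the
rescaling action of `G = (ℝ_{>0})^k` iff it factors through `(φ_1,…,φ_s)`. -/
theorem buckingham_pi (k d s : ℕ) (u : Fin d → Fin k → ℤ)
    (U : Matrix (Fin k) (Fin d) ℤ) (hU : U = Matrix.of fun j i => u i j)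
    (hrank : (U.map (Int.cast : ℤ → ℚ)).rank = k)
    (hs : s = d - k)
    (β : Fin s → Fin d → ℤ)
    (hker : ∀ l, U.mulVec (β l) = 0)
    (hindep : ∀ c : Fin s → ℤ, (∑ l, c l • β l) = 0 → c = 0)
    (hspan : ∀ a : Fin d → ℤ, U.mulVec a = 0 →
      ∃ c : Fin s → ℤ, a = ∑ l, c l • β l)
    (f : (Fin d → ℝ) → ℝ) :
    (∀ (x : Fin d → ℝ), (∀ i, 0 < x i) →
        ∀ (g : Fin k → ℝ), (∀ j, 0 < g j) →
          f (fun i => (∏ j, g j ^ (-(u i j))) * x i) = f x)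
    ↔ (∃ h : (Fin s → ℝ) → ℝ, ∀ (x : Fin d → ℝ), (∀ i, 0 < x i) →
        f x = h (fun l => ∏ i, x i ^ β l i)) :=
  buckingham_pi_general k d s u U hU hrank hs β hker hindep f
end

section
/- (Generalization gap of projection) Let f* ∈ L²(X, μ) and suppose f* is G-invariant, Y = f*(X) + ξ with ξ zero-mean, finite variance, independent of X ∼ μ. For f ∈ L²(X, μ), write f = f̄ + f^⊥ where f̄ is the orthogonal projection of f onto the closed subspace of G-invariant functions. Then the risk gap satisfies R(f) − R(f̄) = ‖f^⊥‖²_μ ≥ 0, where R(h) = E[(Y − h(X))²]. -/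
/-!
Because the noise is centred and independent of `X`, the cross term in `E[(f*(X) - h(X) + ξ)²]`
vanishes, so `R(h) = ‖f* - h‖²_μ + E[ξ²]`. Since `f* - f̄` is invariant, it is orthogonal to
`f - f̄`, and Pythagoras applied to `f* - f = (f* - f̄) - (f - f̄)` gives the gap.
-/

open MeasureTheory ProbabilityTheory

section Expansion

variable {α : Type*} [MeasurableSpace α] {μ : Measure α} {v d : α → ℝ}

theorem integral_add_sq (hv : MemLp v 2 μ) (hd : MemLp d 2 μ) :
    ∫ x, (v x + d x) ^ 2 ∂μ =
      ∫ x, v x ^ 2 ∂μ + 2 * ∫ x, v x * d x ∂μ + ∫ x, d x ^ 2 ∂μ := by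
  have hvd : Integrable (fun x => 2 * (v x * d x)) μ := (hv.integrable_mul hd).const_mul 2
  have hvvd : Integrable (fun x => v x ^ 2 + 2 * (v x * d x)) μ := hv.integrable_sq.add hvd
  simp_rw [add_sq, mul_assoc]
  rw [integral_add hvvd hd.integrable_sq, integral_add hv.integrable_sq hvd, integral_const_mul]

theorem integral_add_sq_of_integral_mul_eq_zero (hv : MemLp v 2 μ) (hd : MemLp d 2 μ)
    (horth : ∫ x, v x * d x ∂μ = 0) :
    ∫ x, (v x + d x) ^ 2 ∂μ = ∫ x, v x ^ 2 ∂μ + ∫ x, d x ^ 2 ∂μ := by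
  rw [integral_add_sq hv hd, horth, mul_zero, add_zero]

theorem integral_sub_sq_of_integral_mul_eq_zero (hv : MemLp v 2 μ) (hd : MemLp d 2 μ)
    (horth : ∫ x, d x * v x ∂μ = 0) :
    ∫ x, (v x - d x) ^ 2 ∂μ = ∫ x, v x ^ 2 ∂μ + ∫ x, d x ^ 2 ∂μ := by
  have horth' : ∫ x, v x * -d x ∂μ = 0 := by
    simp_rw [mul_neg, mul_comm (v _)]
    rw [integral_neg, horth, neg_zero]
  simpa [sub_eq_add_neg] using integral_add_sq_of_integral_mul_eq_zero hv hd.neg horth'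

end Expansion

theorem integral_sq_comp_add_of_indepFun {Ω Z : Type*} [MeasurableSpace Ω] [MeasurableSpace Z]
    {P : Measure Ω} [IsFiniteMeasure P] {μ : Measure Z} {X : Ω → Z} {ξ : Ω → ℝ}
    {u : Z → ℝ} (hX : MeasurePreserving X P μ) (hu : MemLp u 2 μ) (hξ : MemLp ξ 2 P)
    (hξmean : ∫ ω, ξ ω ∂P = 0) (hindep : IndepFun ξ X P) :
    ∫ ω, (u (X ω) + ξ ω) ^ 2 ∂P = ∫ z, u z ^ 2 ∂μ + ∫ ω, ξ ω ^ 2 ∂P := by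
  have huX : MemLp (fun ω => u (X ω)) 2 P := hu.comp_measurePreserving hX
  have hindep' : IndepFun (fun ω => u (X ω)) ξ P :=
    hindep.symm.comp₀ (ψ := id) hX.aemeasurable hξ.aestronglyMeasurable.aemeasurable
      (hX.map_eq ▸ hu.aestronglyMeasurable.aemeasurable) aemeasurable_id
  have hcross : ∫ ω, u (X ω) * ξ ω ∂P = 0 := by
    rw [hindep'.integral_fun_mul_eq_mul_integral huX.aestronglyMeasurable
      hξ.aestronglyMeasurable, hξmean, mul_zero]
  have hchange : ∫ ω, u (X ω) ^ 2 ∂P = ∫ z, u z ^ 2 ∂μ := by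
    rw [← hX.map_eq, integral_map hX.aemeasurable]
    exact hX.map_eq ▸ (hu.aestronglyMeasurable.pow 2)
  rw [integral_add_sq_of_integral_mul_eq_zero huX hξ hcross, hchange]

theorem generalization_gap_of_projection_general
    {G : Type*}
    {Z : Type*} [MeasurableSpace Z]
    (μ : Measure Z)
    (a : G → Z → Z)
    {Ω : Type*} [MeasurableSpace Ω] (P : Measure Ω) [IsProbabilityMeasure P]
    (X : Ω → Z) (hX : Measurable X) (hXlaw : Measure.map X P = μ)
    (ξ : Ω → ℝ) (hξL2 : MemLp ξ 2 P)
    (hξmean : ∫ ω, ξ ω ∂P = 0)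
    (hindep : IndepFun ξ X P)
    (fstar : Z → ℝ) (hfstarL2 : MemLp fstar 2 μ)
    (hfstarinv : ∀ g x, fstar (a g x) = fstar x)
    (Y : Ω → ℝ) (hY : ∀ ω, Y ω = fstar (X ω) + ξ ω)
    (f fbar : Z → ℝ) (hfL2 : MemLp f 2 μ) (hfbarL2 : MemLp fbar 2 μ)
    (hfbarinv : ∀ g x, fbar (a g x) = fbar x)
    (hperp : ∀ h : Z → ℝ, MemLp h 2 μ → (∀ g x, h (a g x) = h x) →
      ∫ x, (f x - fbar x) * h x ∂μ = 0)
    (R : (Z → ℝ) → ℝ)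
    (hR : ∀ h : Z → ℝ, R h = ∫ ω, (Y ω - h (X ω)) ^ 2 ∂P) :
    R f - R fbar = ∫ x, (f x - fbar x) ^ 2 ∂μ ∧
    0 ≤ R f - R fbar := by
  have risk (h : Z → ℝ) (hh : MemLp h 2 μ) :
      R h = ∫ z, (fstar z - h z) ^ 2 ∂μ + ∫ ω, ξ ω ^ 2 ∂P := by
    rw [hR, ← integral_sq_comp_add_of_indepFun (u := fun z => fstar z - h z) ⟨hX, hXlaw⟩
      (hfstarL2.sub hh) hξL2 hξmean hindep]
    congr with ω
    rw [hY]
    ring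
  have horth : ∫ x, (f x - fbar x) * (fstar x - fbar x) ∂μ = 0 :=
    hperp _ (hfstarL2.sub hfbarL2) fun g x => by rw [hfstarinv, hfbarinv]
  have gap : R f - R fbar = ∫ x, (f x - fbar x) ^ 2 ∂μ := by
    have pythagoras := integral_sub_sq_of_integral_mul_eq_zero
      (hfstarL2.sub hfbarL2) (hfL2.sub hfbarL2) horth
    simp only [Pi.sub_apply, sub_sub_sub_cancel_right] at pythagoras
    rw [risk f hfL2, risk fbar hfbarL2, pythagoras]
    ring
  exact ⟨gap, gap ▸ integral_nonneg fun _ => sq_nonneg _⟩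

/-- Generalization gap of projecting onto invariants: if the target `f*` is
`G`-invariant, `Y = f*(X) + ξ` with `ξ` zero-mean, finite-variance noise
independent of `X ∼ μ`, and `f̄` is the orthogonal projection of `f` onto the
invariant functions (characterized as: `f̄` is invariant and `f − f̄` is
orthogonal to all invariant `L²` functions), then
`R(f) − R(f̄) = ‖f − f̄‖²_μ ≥ 0`. -/
theorem generalization_gap_of_projection
    {G : Type*} [Group G] [TopologicalSpace G] [IsTopologicalGroup G]
    [CompactSpace G] [MeasurableSpace G] [BorelSpace G]
    {Z : Type*} [MeasurableSpace Z]
    (μ : Measure Z) [IsProbabilityMeasure μ]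
    (a : G → Z → Z)
    (haction_one : ∀ x, a 1 x = x)
    (haction_mul : ∀ g g' x, a (g * g') x = a g (a g' x))
    (hpres : ∀ g, MeasurePreserving (a g) μ μ)
    {Ω : Type*} [MeasurableSpace Ω] (P : Measure Ω) [IsProbabilityMeasure P]
    (X : Ω → Z) (hX : Measurable X) (hXlaw : Measure.map X P = μ)
    (ξ : Ω → ℝ) (hξmeas : Measurable ξ) (hξL2 : MemLp ξ 2 P)
    (hξmean : ∫ ω, ξ ω ∂P = 0)
    (hindep : IndepFun ξ X P)
    (fstar : Z → ℝ) (hfstarL2 : MemLp fstar 2 μ)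
    (hfstarinv : ∀ g x, fstar (a g x) = fstar x)
    (Y : Ω → ℝ) (hY : ∀ ω, Y ω = fstar (X ω) + ξ ω)
    (f fbar : Z → ℝ) (hfL2 : MemLp f 2 μ) (hfbarL2 : MemLp fbar 2 μ)
    (hfbarinv : ∀ g x, fbar (a g x) = fbar x)
    (hperp : ∀ h : Z → ℝ, MemLp h 2 μ → (∀ g x, h (a g x) = h x) →
      ∫ x, (f x - fbar x) * h x ∂μ = 0)
    (R : (Z → ℝ) → ℝ)
    (hR : ∀ h : Z → ℝ, R h = ∫ ω, (Y ω - h (X ω)) ^ 2 ∂P) :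
    R f - R fbar = ∫ x, (f x - fbar x) ^ 2 ∂μ ∧
    0 ≤ R f - R fbar :=
  generalization_gap_of_projection_general μ a P X hX hXlaw ξ hξL2 hξmean hindep fstar hfstarL2
    hfstarinv Y hY f fbar hfL2 hfbarL2 hfbarinv hperp R hR
end
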